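/- arXiv:1611.03893 — 2 statements merged into one kernel-verified Lean document; each statement's English description precedes it below -/
import Mathlib

section
/- If ψ is admissible, then d_ψ is a metric on the product M₁ × M₂; that is, d_ψ is nonnegative, d_ψ((a₁,a₂),(b₁,b₂)) = 0 if and only if a₁ = b₁ and a₂ = b₂, d_ψ is symmetric, and d_ψ satisfies the triangle inequality. -/
/-- If `ψ` is admissible, then
`d_ψ((a₁,a₂),(b₁,b₂)) = ψ(d₁(a₁,b₁), d₂(a₂,b₂))` is a metric on `M₁ × M₂`. -/
theorem product_metric_is_metric {M₁ M₂ : Type*} [MetricSpace M₁] [MetricSpace M₂]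
    (ψ : ℝ → ℝ → ℝ)
    (hnonneg : ∀ x₁ x₂, 0 ≤ x₁ → 0 ≤ x₂ → 0 ≤ ψ x₁ x₂)
    (hcont : ContinuousOn (fun p : ℝ × ℝ => ψ p.1 p.2) {p | 0 ≤ p.1 ∧ 0 ≤ p.2})
    (hzero : ∀ x₁ x₂, 0 ≤ x₁ → 0 ≤ x₂ → (ψ x₁ x₂ = 0 ↔ x₁ = 0 ∧ x₂ = 0))
    (hmono₁ : ∀ x₁ y₁ x₂, 0 ≤ x₁ → 0 ≤ x₂ → x₁ ≤ y₁ → ψ x₁ x₂ ≤ ψ y₁ x₂)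
    (hmono₂ : ∀ x₁ x₂ y₂, 0 ≤ x₁ → 0 ≤ x₂ → x₂ ≤ y₂ → ψ x₁ x₂ ≤ ψ x₁ y₂)
    (hconv : ∀ x₁ x₂ y₁ y₂, 0 ≤ x₁ → 0 ≤ x₂ → 0 ≤ y₁ → 0 ≤ y₂ →
      ψ ((x₁ + y₁) / 2) ((x₂ + y₂) / 2) ≤ (ψ x₁ x₂ + ψ y₁ y₂) / 2)
    (hhom : ∀ α x₁ x₂, 0 ≤ α → 0 ≤ x₁ → 0 ≤ x₂ →
      ψ (α * x₁) (α * x₂) = α * ψ x₁ x₂) :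
    (∀ a b : M₁ × M₂, 0 ≤ ψ (dist a.1 b.1) (dist a.2 b.2)) ∧
    (∀ a b : M₁ × M₂,
      ψ (dist a.1 b.1) (dist a.2 b.2) = 0 ↔ a.1 = b.1 ∧ a.2 = b.2) ∧
    (∀ a b : M₁ × M₂,
      ψ (dist a.1 b.1) (dist a.2 b.2) = ψ (dist b.1 a.1) (dist b.2 a.2)) ∧
    (∀ a b c : M₁ × M₂,
      ψ (dist a.1 c.1) (dist a.2 c.2) ≤
        ψ (dist a.1 b.1) (dist a.2 b.2) + ψ (dist b.1 c.1) (dist b.2 c.2)) := by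
  have hsub : ∀ x₁ x₂ y₁ y₂ : ℝ, 0 ≤ x₁ → 0 ≤ x₂ → 0 ≤ y₁ → 0 ≤ y₂ →
      ψ (x₁ + y₁) (x₂ + y₂) ≤ ψ x₁ x₂ + ψ y₁ y₂ := by
    intro x₁ x₂ y₁ y₂ hx₁ hx₂ hy₁ hy₂
    have h := hconv x₁ x₂ y₁ y₂ hx₁ hx₂ hy₁ hy₂
    have h2 : ψ (x₁ + y₁) (x₂ + y₂) = 2 * ψ ((x₁ + y₁) / 2) ((x₂ + y₂) / 2) := by
      rw [← hhom 2 _ _ (by norm_num) (by positivity) (by positivity)]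
      ring_nf
    rw [h2]; linarith
  refine ⟨fun a b => hnonneg _ _ dist_nonneg dist_nonneg, fun a b => ?_,
    fun a b => by rw [dist_comm a.1 b.1, dist_comm a.2 b.2], fun a b c => ?_⟩
  · rw [hzero _ _ dist_nonneg dist_nonneg, dist_eq_zero, dist_eq_zero]
  · calc ψ (dist a.1 c.1) (dist a.2 c.2)
        ≤ ψ (dist a.1 b.1 + dist b.1 c.1) (dist a.2 c.2) :=
          hmono₁ _ _ _ dist_nonneg dist_nonneg (dist_triangle _ _ _)
      _ ≤ ψ (dist a.1 b.1 + dist b.1 c.1) (dist a.2 b.2 + dist b.2 c.2) :=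
          hmono₂ _ _ _ (by positivity) dist_nonneg (dist_triangle _ _ _)
      _ ≤ _ := hsub _ _ _ _ dist_nonneg dist_nonneg dist_nonneg dist_nonneg
end

section
/- Let A and B be n × n real symmetric matrices with eigenvalues λ₁(A) ≤ ⋯ ≤ λₙ(A) and λ₁(B) ≤ ⋯ ≤ λₙ(B) listed in nondecreasing order. Then for every orthogonal n × n matrix Q, ‖A − Qᵀ·B·Q‖_F ≥ (Σᵢ (λᵢ(A) − λᵢ(B))²)^{1/2}, and there exists an orthogonal matrix Q₀ achieving equality, namely any Q₀ = P₂ᵀ·P₁ where P₁, P₂ are orthogonal matrices with P₁·A·P₁ᵀ and P₂·B·P₂ᵀ diagonal with nondecreasing diagonal entries. Hence min_{Q orthogonal} ‖A − Qᵀ·B·Q‖_F = (Σᵢ (λᵢ(A) − λᵢ(B))²)^{1/2}. -/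
open Matrix Finset

private lemma trace_conj {n : ℕ} (P : Matrix (Fin n) (Fin n) ℝ) (hP : P * Pᵀ = 1)
    (X : Matrix (Fin n) (Fin n) ℝ) : Matrix.trace (Pᵀ * X * P) = Matrix.trace X := by
  rw [Matrix.trace_mul_comm, ← Matrix.mul_assoc, hP, Matrix.one_mul]

private lemma cancel_left {n : ℕ} {P : Matrix (Fin n) (Fin n) ℝ} (hP : P * Pᵀ = 1)
    (X : Matrix (Fin n) (Fin n) ℝ) : P * (Pᵀ * X) = X := by
  rw [← Matrix.mul_assoc, hP, Matrix.one_mul]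

private lemma cancel_left' {n : ℕ} {P : Matrix (Fin n) (Fin n) ℝ} (hP : P * Pᵀ = 1)
    (X : Matrix (Fin n) (Fin n) ℝ) : Pᵀ * (P * X) = X := by
  rw [← Matrix.mul_assoc, mul_eq_one_comm.mp hP, Matrix.one_mul]

private lemma key_sum_le {n : ℕ} (lamA lamB : Fin n → ℝ) (hlamA : Monotone lamA)
    (hlamB : Monotone lamB) (W : Matrix (Fin n) (Fin n) ℝ) (hW : W * Wᵀ = 1) :
    ∑ i, ∑ j, lamA i * lamB j * (W i j * W i j) ≤ ∑ i, lamA i * lamB i := by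
  have hW' : Wᵀ * W = 1 := mul_eq_one_comm.mp hW
  set S : Matrix (Fin n) (Fin n) ℝ := Matrix.of fun i j => W i j * W i j with hSdef
  have hS : S ∈ doublyStochastic ℝ (Fin n) := by
    rw [mem_doublyStochastic_iff_sum]
    refine ⟨fun i j => mul_self_nonneg _, fun i => ?_, fun j => ?_⟩
    · have := congrFun (congrFun hW i) i
      simpa [Matrix.mul_apply, Matrix.one_apply, S] using this
    · have := congrFun (congrFun hW' j) j
      simpa [Matrix.mul_apply, Matrix.one_apply, S] using this
  obtain ⟨w, hw0, hw1, hwS⟩ := exists_eq_sum_perm_of_mem_doublyStochastic hS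
  have hSentry : ∀ i j, S i j = ∑ σ : Equiv.Perm (Fin n), w σ * (σ.permMatrix ℝ) i j := by
    intro i j
    rw [← hwS]
    simp [Matrix.sum_apply, Matrix.smul_apply]
  calc ∑ i, ∑ j, lamA i * lamB j * (W i j * W i j)
      = ∑ i, ∑ j, ∑ σ : Equiv.Perm (Fin n), lamA i * lamB j * (w σ * (σ.permMatrix ℝ) i j) := by
        simp only [show ∀ i j, W i j * W i j = S i j from fun _ _ => rfl, hSentry,
          Finset.mul_sum]
    _ = ∑ σ : Equiv.Perm (Fin n), ∑ i, ∑ j,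
          lamA i * lamB j * (w σ * (σ.permMatrix ℝ) i j) := by
        rw [show (∑ i, ∑ j, ∑ σ : Equiv.Perm (Fin n),
            lamA i * lamB j * (w σ * (σ.permMatrix ℝ) i j)) = ∑ i, ∑ σ : Equiv.Perm (Fin n), ∑ j,
            lamA i * lamB j * (w σ * (σ.permMatrix ℝ) i j) from
          Finset.sum_congr rfl fun i _ => Finset.sum_comm, Finset.sum_comm]
    _ = ∑ σ : Equiv.Perm (Fin n), w σ * ∑ i, lamA i * lamB (σ i) := by
        refine Finset.sum_congr rfl fun σ _ => ?_
        rw [Finset.mul_sum]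
        refine Finset.sum_congr rfl fun i _ => ?_
        simp only [Equiv.Perm.permMatrix, PEquiv.toMatrix_apply, Equiv.toPEquiv_apply,
          Option.mem_def, Option.some.injEq, mul_ite, mul_one, mul_zero]
        rw [Finset.sum_ite_eq univ (σ i) (fun j => lamA i * lamB j * w σ)]
        simp [mul_comm, mul_assoc, mul_left_comm]
    _ ≤ ∑ σ : Equiv.Perm (Fin n), w σ * ∑ i, lamA i * lamB i :=
        Finset.sum_le_sum fun σ _ =>
          mul_le_mul_of_nonneg_left ((hlamA.monovary hlamB).sum_mul_comp_perm_le_sum_mul) (hw0 σ)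
    _ = ∑ i, lamA i * lamB i := by rw [← Finset.sum_mul, hw1, one_mul]

/-- The Frobenius norm of a real square matrix, `‖X‖_F = (tr(X·Xᵀ))^{1/2}`. -/
noncomputable def frobeniusNorm {n : ℕ} (X : Matrix (Fin n) (Fin n) ℝ) : ℝ :=
  Real.sqrt (Matrix.trace (X * Xᵀ))

/-- For real symmetric `A, B` with eigenvalues `λA, λB` listed in
nondecreasing order (diagonalized by orthogonal `P₁, P₂`), the two-sided
orthogonal Procrustes problem has value `(Σᵢ (λA i − λB i)²)^{1/2}`: this value
is a lower bound for `‖A − Qᵀ·B·Q‖_F` over orthogonal `Q`, it is attained at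
`Q₀ = P₂ᵀ·P₁`, and hence it is the minimum. -/
theorem two_sided_procrustes {n : ℕ} (A B : Matrix (Fin n) (Fin n) ℝ)
    (hA : A.IsSymm) (hB : B.IsSymm)
    (lamA lamB : Fin n → ℝ) (hlamA : Monotone lamA) (hlamB : Monotone lamB)
    (P₁ P₂ : Matrix (Fin n) (Fin n) ℝ)
    (hP₁ : P₁ * P₁ᵀ = 1) (hP₂ : P₂ * P₂ᵀ = 1)
    (hdiagA : P₁ * A * P₁ᵀ = Matrix.diagonal lamA)
    (hdiagB : P₂ * B * P₂ᵀ = Matrix.diagonal lamB) :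
    (∀ Q : Matrix (Fin n) (Fin n) ℝ, Q * Qᵀ = 1 →
      Real.sqrt (∑ i, (lamA i - lamB i) ^ 2) ≤ frobeniusNorm (A - Qᵀ * B * Q)) ∧
    frobeniusNorm (A - (P₂ᵀ * P₁)ᵀ * B * (P₂ᵀ * P₁)) =
      Real.sqrt (∑ i, (lamA i - lamB i) ^ 2) ∧
    IsLeast {x : ℝ | ∃ Q : Matrix (Fin n) (Fin n) ℝ,
        Q * Qᵀ = 1 ∧ x = frobeniusNorm (A - Qᵀ * B * Q)}
      (Real.sqrt (∑ i, (lamA i - lamB i) ^ 2)) := by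
  have hA' : A = P₁ᵀ * Matrix.diagonal lamA * P₁ := by
    rw [← hdiagA]
    simp only [Matrix.mul_assoc, cancel_left hP₁, cancel_left' hP₁, hP₁,
      mul_eq_one_comm.mp hP₁, Matrix.mul_one, Matrix.one_mul]
  have hB' : B = P₂ᵀ * Matrix.diagonal lamB * P₂ := by
    rw [← hdiagB]
    simp only [Matrix.mul_assoc, cancel_left hP₂, cancel_left' hP₂, hP₂,
      mul_eq_one_comm.mp hP₂, Matrix.mul_one, Matrix.one_mul]
  have hsum : ∑ i, (lamA i - lamB i) ^ 2
      = ∑ i, lamA i ^ 2 + ∑ i, lamB i ^ 2 - 2 * ∑ i, lamA i * lamB i := by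
    have h : ∀ i : Fin n, (lamA i - lamB i) ^ 2
        = lamA i ^ 2 + lamB i ^ 2 - 2 * (lamA i * lamB i) := fun i => by ring
    simp_rw [h]
    rw [Finset.sum_sub_distrib, Finset.sum_add_distrib, ← Finset.mul_sum]
  -- Lower bound on the squared distance for any orthogonal Q
  have hQmain : ∀ Q : Matrix (Fin n) (Fin n) ℝ, Q * Qᵀ = 1 →
      ∑ i, (lamA i - lamB i) ^ 2
        ≤ Matrix.trace ((A - Qᵀ * B * Q) * (A - Qᵀ * B * Q)ᵀ) := by
    intro Q hQ
    set M := Qᵀ * B * Q with hMdef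
    have hMsymm : Mᵀ = M := by
      rw [hMdef]
      simp only [Matrix.transpose_mul, Matrix.transpose_transpose, hB.eq, Matrix.mul_assoc]
    set W := P₁ * Qᵀ * P₂ᵀ with hWdef
    have hW : W * Wᵀ = 1 := by
      rw [hWdef]
      simp only [Matrix.transpose_mul, Matrix.transpose_transpose, Matrix.mul_assoc,
        cancel_left' hP₂, cancel_left hQ, cancel_left' hQ, hP₁]
    have htrAA : Matrix.trace (A * Aᵀ) = ∑ i, lamA i ^ 2 := by
      rw [hA.eq]
      rw [show A * A = P₁ᵀ * (Matrix.diagonal lamA * Matrix.diagonal lamA) * P₁ by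
        rw [hA']; simp only [Matrix.mul_assoc, cancel_left hP₁, cancel_left' hP₁]]
      rw [trace_conj P₁ hP₁, Matrix.diagonal_mul_diagonal, Matrix.trace_diagonal]
      simp [pow_two]
    have htrMM : Matrix.trace (M * Mᵀ) = ∑ i, lamB i ^ 2 := by
      rw [hMsymm, hMdef]
      rw [show Qᵀ * B * Q * (Qᵀ * B * Q) = Qᵀ * (B * B) * Q by
        simp only [Matrix.mul_assoc, cancel_left hQ, cancel_left' hQ]]
      rw [trace_conj Q hQ]
      rw [show B * B = P₂ᵀ * (Matrix.diagonal lamB * Matrix.diagonal lamB) * P₂ by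
        rw [hB']; simp only [Matrix.mul_assoc, cancel_left hP₂, cancel_left' hP₂]]
      rw [trace_conj P₂ hP₂, Matrix.diagonal_mul_diagonal, Matrix.trace_diagonal]
      simp [pow_two]
    have htrAM : Matrix.trace (A * M)
        = ∑ i, ∑ j, lamA i * lamB j * (W i j * W i j) := by
      have h1 : A * M = P₁ᵀ * (Matrix.diagonal lamA * W * Matrix.diagonal lamB * Wᵀ) * P₁ := by
        rw [hMdef, hA', hB', hWdef]
        simp only [Matrix.transpose_mul, Matrix.transpose_transpose, Matrix.mul_assoc,
          cancel_left hP₁, cancel_left' hP₁, cancel_left hP₂, cancel_left' hP₂,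
          cancel_left hQ, cancel_left' hQ, hP₁, mul_eq_one_comm.mp hP₁, hP₂,
          mul_eq_one_comm.mp hP₂, hQ, mul_eq_one_comm.mp hQ, Matrix.mul_one]
      rw [h1, trace_conj P₁ hP₁, Matrix.trace]
      refine Finset.sum_congr rfl fun i _ => ?_
      simp only [Matrix.diag_apply, Matrix.mul_apply, Matrix.diagonal_apply,
        Matrix.transpose_apply, ite_mul, zero_mul, mul_ite, mul_zero,
        Finset.sum_ite_eq, Finset.sum_ite_eq', Finset.mem_univ, if_true,
        Finset.sum_mul, Finset.mul_sum]
      refine Finset.sum_congr rfl fun j _ => ?_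
      ring
    have hexpand : Matrix.trace ((A - M) * (A - M)ᵀ)
        = Matrix.trace (A * Aᵀ) + Matrix.trace (M * Mᵀ) - 2 * Matrix.trace (A * M) := by
      rw [Matrix.transpose_sub, Matrix.sub_mul, Matrix.mul_sub, Matrix.mul_sub,
        Matrix.trace_sub, Matrix.trace_sub, Matrix.trace_sub]
      have e1 : Matrix.trace (A * Mᵀ) = Matrix.trace (A * M) := by rw [hMsymm]
      have e2 : Matrix.trace (M * Aᵀ) = Matrix.trace (A * M) := by
        rw [hA.eq, Matrix.trace_mul_comm]
      rw [e1, e2]; ring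
    have hkey := key_sum_le lamA lamB hlamA hlamB W hW
    rw [hexpand, htrAA, htrMM, hsum]
    linarith [htrAM ▸ hkey]
  -- the equality case
  have hQ₀ : (P₂ᵀ * P₁) * (P₂ᵀ * P₁)ᵀ = 1 := by
    simp only [Matrix.transpose_mul, Matrix.transpose_transpose, Matrix.mul_assoc,
      cancel_left hP₁, mul_eq_one_comm.mp hP₂]
  have hC : A - (P₂ᵀ * P₁)ᵀ * B * (P₂ᵀ * P₁)
      = P₁ᵀ * Matrix.diagonal (fun i => lamA i - lamB i) * P₁ := by
    have h2 : (P₂ᵀ * P₁)ᵀ * B * (P₂ᵀ * P₁) = P₁ᵀ * Matrix.diagonal lamB * P₁ := by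
      rw [show (P₂ᵀ * P₁)ᵀ * B * (P₂ᵀ * P₁) = P₁ᵀ * (P₂ * B * P₂ᵀ) * P₁ by
        simp only [Matrix.transpose_mul, Matrix.transpose_transpose, Matrix.mul_assoc]]
      rw [hdiagB]
    rw [h2, hA', ← Matrix.sub_mul, ← Matrix.mul_sub, Matrix.diagonal_sub]
  have heq : Matrix.trace ((A - (P₂ᵀ * P₁)ᵀ * B * (P₂ᵀ * P₁))
      * (A - (P₂ᵀ * P₁)ᵀ * B * (P₂ᵀ * P₁))ᵀ) = ∑ i, (lamA i - lamB i) ^ 2 := by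
    rw [hC]
    simp only [Matrix.transpose_mul, Matrix.transpose_transpose, Matrix.diagonal_transpose]
    rw [show P₁ᵀ * Matrix.diagonal (fun i => lamA i - lamB i) * P₁
        * (P₁ᵀ * (Matrix.diagonal (fun i => lamA i - lamB i) * P₁))
        = P₁ᵀ * (Matrix.diagonal (fun i => lamA i - lamB i)
          * Matrix.diagonal (fun i => lamA i - lamB i)) * P₁ by
      simp only [Matrix.mul_assoc, cancel_left hP₁, cancel_left' hP₁]]
    rw [trace_conj P₁ hP₁, Matrix.diagonal_mul_diagonal, Matrix.trace_diagonal]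
    simp [pow_two]
  have part2 : frobeniusNorm (A - (P₂ᵀ * P₁)ᵀ * B * (P₂ᵀ * P₁))
      = Real.sqrt (∑ i, (lamA i - lamB i) ^ 2) := by
    rw [frobeniusNorm, heq]
  have part1 : ∀ Q : Matrix (Fin n) (Fin n) ℝ, Q * Qᵀ = 1 →
      Real.sqrt (∑ i, (lamA i - lamB i) ^ 2) ≤ frobeniusNorm (A - Qᵀ * B * Q) := by
    intro Q hQ
    exact Real.sqrt_le_sqrt (hQmain Q hQ)
  refine ⟨part1, part2, ⟨⟨P₂ᵀ * P₁, hQ₀, part2.symm⟩, ?_⟩⟩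
  rintro x ⟨Q, hQ, rfl⟩
  exact part1 Q hQ
end
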